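/- Let Ω, Ω' ⊆ ℝ² be open sets, let f₀, f₁ : Ω → ℝ³ be continuously differentiable with nonvanishing cross product of partial derivatives, and let φ : Ω' → Ω be a continuously differentiable bijection with det(Dφ(x)) > 0 for all x ∈ Ω'. Then the squared L² distance between square root normal fields is reparametrization invariant: ∫_{Ω'} ‖ñ_{f₀∘φ}(x) − ñ_{f₁∘φ}(x)‖² dx = ∫_Ω ‖ñ_{f₀}(y) − ñ_{f₁}(y)‖² dy, assuming the integrals are finite. -/

import Mathlib

open Set MeasureTheory

noncomputable section

/-- The cross product on `ℝ³`. -/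
def cross (u v : EuclideanSpace ℝ (Fin 3)) : EuclideanSpace ℝ (Fin 3) :=
  WithLp.toLp 2 ![u 1 * v 2 - u 2 * v 1, u 2 * v 0 - u 0 * v 2, u 0 * v 1 - u 1 * v 0]

/-- The partial derivative `∂ᵢ f` of a surface patch `f : ℝ² → ℝ³` in the `i`-th
standard coordinate direction. -/
def pderiv' (i : Fin 2) (f : EuclideanSpace ℝ (Fin 2) → EuclideanSpace ℝ (Fin 3))
    (x : EuclideanSpace ℝ (Fin 2)) : EuclideanSpace ℝ (Fin 3) :=
  fderiv ℝ f x (EuclideanSpace.single i 1)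

/-- The square root normal field (SRNF) of a surface patch:
`ñ_f x = (∂₁f x × ∂₂f x) / ‖∂₁f x × ∂₂f x‖ ^ (1/2)`. -/
def srnfS (f : EuclideanSpace ℝ (Fin 2) → EuclideanSpace ℝ (Fin 3))
    (x : EuclideanSpace ℝ (Fin 2)) : EuclideanSpace ℝ (Fin 3) :=
  (Real.sqrt ‖cross (pderiv' 0 f x) (pderiv' 1 f x)‖)⁻¹ •
    cross (pderiv' 0 f x) (pderiv' 1 f x)


lemma cross_lin (u v : EuclideanSpace ℝ (Fin 3)) (a b c d : ℝ) :
    cross (a • u + b • v) (c • u + d • v) = (a * d - b * c) • cross u v := by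
  ext i
  fin_cases i <;>
    simp [cross, PiLp.add_apply, PiLp.smul_apply, smul_eq_mul] <;> ring

lemma decomp2 (w : EuclideanSpace ℝ (Fin 2)) :
    w = w 0 • EuclideanSpace.single 0 1 + w 1 • EuclideanSpace.single 1 1 := by
  ext i
  fin_cases i <;>
    simp [PiLp.add_apply, PiLp.smul_apply, EuclideanSpace.single_apply, smul_eq_mul]

lemma det_fin_two' (J : EuclideanSpace ℝ (Fin 2) →L[ℝ] EuclideanSpace ℝ (Fin 2)) :
    J.det = J (EuclideanSpace.single 0 1) 0 * J (EuclideanSpace.single 1 1) 1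
      - J (EuclideanSpace.single 0 1) 1 * J (EuclideanSpace.single 1 1) 0 := by
  have h : J.det = LinearMap.det (J : EuclideanSpace ℝ (Fin 2) →ₗ[ℝ] EuclideanSpace ℝ (Fin 2)) :=
    rfl
  rw [h, ← LinearMap.det_toMatrix (EuclideanSpace.basisFun (Fin 2) ℝ).toBasis,
    Matrix.det_fin_two]
  simp [LinearMap.toMatrix_apply, EuclideanSpace.basisFun_apply]
  ring

lemma cross_comp (f : EuclideanSpace ℝ (Fin 2) → EuclideanSpace ℝ (Fin 3))
    (φ : EuclideanSpace ℝ (Fin 2) → EuclideanSpace ℝ (Fin 2))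
    (x : EuclideanSpace ℝ (Fin 2))
    (hφ : DifferentiableAt ℝ φ x) (hf : DifferentiableAt ℝ f (φ x)) :
    cross (pderiv' 0 (f ∘ φ) x) (pderiv' 1 (f ∘ φ) x)
      = (fderiv ℝ φ x).det • cross (pderiv' 0 f (φ x)) (pderiv' 1 f (φ x)) := by
  have hcomp : fderiv ℝ (f ∘ φ) x = (fderiv ℝ f (φ x)).comp (fderiv ℝ φ x) :=
    fderiv_comp x hf hφ
  set J := fderiv ℝ φ x
  set D := fderiv ℝ f (φ x)
  have hp : ∀ i : Fin 2, pderiv' i (f ∘ φ) x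
      = (J (EuclideanSpace.single i 1) 0) • pderiv' 0 f (φ x)
        + (J (EuclideanSpace.single i 1) 1) • pderiv' 1 f (φ x) := by
    intro i
    have : pderiv' i (f ∘ φ) x = D (J (EuclideanSpace.single i 1)) := by
      simp [pderiv', hcomp]
    rw [this, decomp2 (J (EuclideanSpace.single i 1))]
    simp [pderiv']
    rfl
  rw [hp 0, hp 1, cross_lin, det_fin_two']

lemma srnfS_comp (f : EuclideanSpace ℝ (Fin 2) → EuclideanSpace ℝ (Fin 3))
    (φ : EuclideanSpace ℝ (Fin 2) → EuclideanSpace ℝ (Fin 2))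
    (x : EuclideanSpace ℝ (Fin 2))
    (hφ : DifferentiableAt ℝ φ x) (hf : DifferentiableAt ℝ f (φ x))
    (hdet : 0 < (fderiv ℝ φ x).det) :
    srnfS (f ∘ φ) x = Real.sqrt (fderiv ℝ φ x).det • srnfS f (φ x) := by
  set k := (fderiv ℝ φ x).det with hk
  set c := cross (pderiv' 0 f (φ x)) (pderiv' 1 f (φ x))
  have hc : cross (pderiv' 0 (f ∘ φ) x) (pderiv' 1 (f ∘ φ) x) = k • c :=
    cross_comp f φ x hφ hf
  rw [srnfS, hc, srnfS]
  have hnorm : ‖k • c‖ = k * ‖c‖ := by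
    rw [norm_smul, Real.norm_eq_abs, abs_of_pos hdet]
  rw [hnorm, Real.sqrt_mul hdet.le, smul_smul, smul_smul, mul_inv]
  congr 1
  have hsq : Real.sqrt k * Real.sqrt k = k := Real.mul_self_sqrt hdet.le
  have hs : Real.sqrt k ≠ 0 := by positivity
  have h1 : (Real.sqrt k)⁻¹ * k = Real.sqrt k := by
    field_simp
    exact (Real.sq_sqrt hdet.le).symm
  rw [mul_comm (Real.sqrt k)⁻¹, mul_assoc, h1, mul_comm]

/-- The squared `L²` distance between surface SRNFs is reparametrization invariant. -/
theorem srnfS_L2_distance_reparametrization_invariant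
    (Ω Ω' : Set (EuclideanSpace ℝ (Fin 2)))
    (hΩ : IsOpen Ω) (hΩ' : IsOpen Ω')
    (f₀ f₁ : EuclideanSpace ℝ (Fin 2) → EuclideanSpace ℝ (Fin 3))
    (φ : EuclideanSpace ℝ (Fin 2) → EuclideanSpace ℝ (Fin 2))
    (hf₀ : ContDiffOn ℝ 1 f₀ Ω)
    (hf₀' : ∀ x ∈ Ω, cross (pderiv' 0 f₀ x) (pderiv' 1 f₀ x) ≠ 0)
    (hf₁ : ContDiffOn ℝ 1 f₁ Ω)
    (hf₁' : ∀ x ∈ Ω, cross (pderiv' 0 f₁ x) (pderiv' 1 f₁ x) ≠ 0)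
    (hφ : ContDiffOn ℝ 1 φ Ω') (hφbij : BijOn φ Ω' Ω)
    (hφdet : ∀ x ∈ Ω', 0 < (fderiv ℝ φ x).det)
    (hint' : IntegrableOn (fun x => ‖srnfS (f₀ ∘ φ) x - srnfS (f₁ ∘ φ) x‖ ^ 2) Ω')
    (hint : IntegrableOn (fun y => ‖srnfS f₀ y - srnfS f₁ y‖ ^ 2) Ω) :
    ∫ x in Ω', ‖srnfS (f₀ ∘ φ) x - srnfS (f₁ ∘ φ) x‖ ^ 2
      = ∫ y in Ω, ‖srnfS f₀ y - srnfS f₁ y‖ ^ 2 := by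
  have himg : φ '' Ω' = Ω := hφbij.image_eq
  have hderiv : ∀ x ∈ Ω', HasFDerivWithinAt φ (fderiv ℝ φ x) Ω' x := fun x hx =>
    ((hφ.contDiffAt (hΩ'.mem_nhds hx)).differentiableAt one_ne_zero).hasFDerivAt.hasFDerivWithinAt
  rw [← himg, MeasureTheory.integral_image_eq_integral_abs_det_fderiv_smul volume
    hΩ'.measurableSet hderiv hφbij.injOn (fun y => ‖srnfS f₀ y - srnfS f₁ y‖ ^ 2)]
  apply setIntegral_congr_fun hΩ'.measurableSet
  intro x hx
  have hx' : φ x ∈ Ω := hφbij.mapsTo hx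
  have hφd : DifferentiableAt ℝ φ x :=
    (hφ.contDiffAt (hΩ'.mem_nhds hx)).differentiableAt one_ne_zero
  have hf₀d : DifferentiableAt ℝ f₀ (φ x) :=
    (hf₀.contDiffAt (hΩ.mem_nhds hx')).differentiableAt one_ne_zero
  have hf₁d : DifferentiableAt ℝ f₁ (φ x) :=
    (hf₁.contDiffAt (hΩ.mem_nhds hx')).differentiableAt one_ne_zero
  have hdet := hφdet x hx
  simp only
  rw [srnfS_comp f₀ φ x hφd hf₀d hdet, srnfS_comp f₁ φ x hφd hf₁d hdet, ← smul_sub,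
    norm_smul, Real.norm_eq_abs, abs_of_nonneg (Real.sqrt_nonneg _), mul_pow,
    Real.sq_sqrt hdet.le, smul_eq_mul, abs_of_pos hdet]
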